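/- Fix n ≥ 3 and 1 ≤ j < i ≤ n. The map that deletes the first letter of π and decreases all letters greater than i by one is a bijection from the set of permutations of [n] avoiding {1243, 1324} that begin with i followed by j, onto the set of permutations of [n-1] avoiding {1243, 1324} that begin with j. Moreover this map decreases the number of descents by exactly one. -/

import Mathlib

/-- The word `w` contains the pattern `p`: some subsequence of `w` is
order-isomorphic to `p`. -/
def ContainsPat (w p : List ℕ) : Prop :=
  ∃ s : List ℕ, s.Sublist w ∧ s.length = p.length ∧
    ∀ i j : ℕ, i < p.length → j < p.length → (s[i]! < s[j]! ↔ p[i]! < p[j]!)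

/-- The word `w` avoids the pattern `p`. -/
def AvoidsPat (w p : List ℕ) : Prop := ¬ ContainsPat w p

/-- `π` is the one-line notation of a permutation of `{1,…,n}`. -/
def IsPermList (n : ℕ) (π : List ℕ) : Prop :=
  π.Perm ((List.range n).map (· + 1))

/-- The number of descents of a word. -/
def descList (π : List ℕ) : ℕ :=
  ((List.range (π.length - 1)).filter (fun t => decide (π[t + 1]! < π[t]!))).length

/-- Decrease every letter greater than `i` by one. -/
def reduceGt (i : ℕ) (l : List ℕ) : List ℕ := l.map (fun x => if i < x then x - 1 else x)


/-!
Deleting the leading `i` and closing the gap at `i` (`Nat.predAbove`) is undone by opening a gap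
at `i` (`Nat.succAbove`) and putting `i` back in front, so the map is invertible as long as
pattern avoidance transfers both ways. Both gap maps are order isomorphisms on the letters
involved, so they preserve pattern containment. An occurrence of `1243` or `1324` through the
leading `i` has `i` as its least letter, so it cannot use `j < i`, and replacing `i` by `j` gives
an occurrence in the tail. The only descent lost is the initial `i > j`.
-/

namespace Nat

def predAbove (i x : ℕ) : ℕ := if i < x then x - 1 else x

def succAbove (i x : ℕ) : ℕ := if i ≤ x then x + 1 else x

variable {i x y : ℕ}

theorem predAbove_of_lt (h : x < i) : predAbove i x = x := if_neg (by omega)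

theorem succAbove_of_lt (h : x < i) : succAbove i x = x := if_neg (by omega)

theorem predAbove_succAbove (i x : ℕ) : predAbove i (succAbove i x) = x := by
  unfold predAbove succAbove; split_ifs <;> omega

theorem succAbove_predAbove (hx : x ≠ i) : succAbove i (predAbove i x) = x := by
  unfold predAbove succAbove; split_ifs <;> omega

theorem succAbove_ne (i x : ℕ) : succAbove i x ≠ i := by
  unfold succAbove; split_ifs <;> omega

theorem succAbove_strictMono (i : ℕ) : StrictMono (succAbove i) := by
  intro x y hxy; unfold succAbove; split_ifs <;> omega

theorem predAbove_lt_predAbove_iff (hx : x ≠ i) (hy : y ≠ i) :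
    predAbove i x < predAbove i y ↔ x < y := by
  unfold predAbove; split_ifs <;> omega

end Nat

open Nat

theorem reduceGt_eq_map (i : ℕ) (l : List ℕ) : reduceGt i l = l.map (predAbove i) := rfl

theorem predAbove_lt_predAbove_iff_of_notMem {i : ℕ} {τ : List ℕ} (hi : i ∉ τ) :
    ∀ x ∈ τ, ∀ y ∈ τ, predAbove i x < predAbove i y ↔ x < y :=
  fun _ hx _ hy => predAbove_lt_predAbove_iff (ne_of_mem_of_not_mem hx hi)
    (ne_of_mem_of_not_mem hy hi)

theorem map_succAbove_map_predAbove {i : ℕ} {τ : List ℕ} (hi : i ∉ τ) :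
    (τ.map (predAbove i)).map (succAbove i) = τ := by
  rw [List.map_map]
  exact List.map_congr_left (fun x hx => succAbove_predAbove (ne_of_mem_of_not_mem hx hi)) |>.trans
    (List.map_id τ)

theorem isPermList_iff {n : ℕ} {π : List ℕ} :
    IsPermList n π ↔ π.Nodup ∧ ∀ x, x ∈ π ↔ 1 ≤ x ∧ x ≤ n := by
  have hnd : ((List.range n).map (· + 1)).Nodup := List.nodup_range.map (add_left_injective 1)
  have hmem : ∀ x, x ∈ (List.range n).map (· + 1) ↔ 1 ≤ x ∧ x ≤ n := by
    intro x
    simp only [List.mem_map, List.mem_range]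
    exact ⟨by rintro ⟨a, ha, rfl⟩; omega, fun h => ⟨x - 1, by omega, by omega⟩⟩
  refine ⟨fun h => ⟨h.nodup_iff.mpr hnd, fun x => h.mem_iff.trans (hmem x)⟩, ?_⟩
  rintro ⟨hπ, hx⟩
  exact (List.perm_ext_iff_of_nodup hπ hnd).mpr fun x => (hx x).trans (hmem x).symm

theorem IsPermList.map_predAbove {n i : ℕ} {τ : List ℕ} (h : IsPermList n (i :: τ)) :
    IsPermList (n - 1) (τ.map (predAbove i)) := by
  obtain ⟨hnd, hmem⟩ := isPermList_iff.mp h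
  obtain ⟨hiτ, hτ⟩ := List.nodup_cons.mp hnd
  have hi := (hmem i).mp List.mem_cons_self
  refine isPermList_iff.mpr ⟨((map_succAbove_map_predAbove hiτ).symm ▸ hτ).of_map _,
    fun y => ⟨fun hy => ?_, fun hy => ?_⟩⟩
  · obtain ⟨x, hx, rfl⟩ := List.mem_map.mp hy
    have := (hmem x).mp (List.mem_cons_of_mem i hx)
    have := ne_of_mem_of_not_mem hx hiτ
    unfold predAbove; split_ifs <;> omega
  · have hmem' : succAbove i y ∈ i :: τ := (hmem _).mpr (by unfold succAbove; split_ifs <;> omega)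
    exact List.mem_map.mpr ⟨succAbove i y,
      (List.mem_cons.mp hmem').resolve_left (succAbove_ne i y), predAbove_succAbove i y⟩

theorem IsPermList.cons_map_succAbove {n i : ℕ} {σ : List ℕ} (hi : 1 ≤ i) (hin : i ≤ n)
    (h : IsPermList (n - 1) σ) : IsPermList n (i :: σ.map (succAbove i)) := by
  obtain ⟨hnd, hmem⟩ := isPermList_iff.mp h
  refine isPermList_iff.mpr ⟨List.nodup_cons.mpr ⟨fun hi' => ?_,
    hnd.map (succAbove_strictMono i).injective⟩, fun x => ⟨?_, fun hx => ?_⟩⟩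
  · obtain ⟨y, -, hy⟩ := List.mem_map.mp hi'
    exact succAbove_ne i y hy
  · rintro (_ | ⟨_, hx⟩)
    · omega
    · obtain ⟨y, hy, rfl⟩ := List.mem_map.mp hx
      have := (hmem y).mp hy
      unfold succAbove; split_ifs <;> omega
  · by_cases hxi : x = i
    · exact hxi ▸ List.mem_cons_self
    refine List.mem_cons_of_mem i (List.mem_map.mpr ⟨predAbove i x, (hmem _).mpr ?_,
      succAbove_predAbove hxi⟩)
    unfold predAbove; split_ifs <;> omega

theorem map_getElem!_lt_map_getElem!_iff {f : ℕ → ℕ} {s : List ℕ}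
    (hf : ∀ x ∈ s, ∀ y ∈ s, f x < f y ↔ x < y) {a b : ℕ} (ha : a < s.length)
    (hb : b < s.length) : (s.map f)[a]! < (s.map f)[b]! ↔ s[a]! < s[b]! := by
  rw [getElem!_pos s a ha, getElem!_pos s b hb, getElem!_pos (s.map f) a (by simpa using ha),
    getElem!_pos (s.map f) b (by simpa using hb), List.getElem_map, List.getElem_map]
  exact hf _ (s.getElem_mem ha) _ (s.getElem_mem hb)

theorem ContainsPat.mono {w w' p : List ℕ} (h : ContainsPat w p) (hw : w.Sublist w') :
    ContainsPat w' p :=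
  let ⟨s, hs, hlen, hord⟩ := h
  ⟨s, hs.trans hw, hlen, hord⟩

theorem containsPat_map_iff {f : ℕ → ℕ} {w p : List ℕ}
    (hf : ∀ x ∈ w, ∀ y ∈ w, f x < f y ↔ x < y) : ContainsPat (w.map f) p ↔ ContainsPat w p := by
  constructor
  · rintro ⟨t, ht, hlen, hord⟩
    obtain ⟨s, hs, rfl⟩ := List.sublist_map_iff.mp ht
    rw [List.length_map] at hlen
    refine ⟨s, hs, hlen, fun a b ha hb => ?_⟩
    rw [← hord a b ha hb, map_getElem!_lt_map_getElem!_iff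
      (fun x hx y hy => hf x (hs.subset hx) y (hs.subset hy)) (hlen ▸ ha) (hlen ▸ hb)]
  · rintro ⟨s, hs, hlen, hord⟩
    refine ⟨s.map f, hs.map f, by rw [List.length_map, hlen], fun a b ha hb => ?_⟩
    rw [← hord a b ha hb, map_getElem!_lt_map_getElem!_iff
      (fun x hx y hy => hf x (hs.subset hx) y (hs.subset hy)) (hlen ▸ ha) (hlen ▸ hb)]

theorem ContainsPat.of_cons_cons {m a b : ℕ} {q r : List ℕ} (hq : ∀ x ∈ q, m < x) (hba : b < a)
    (h : ContainsPat (a :: b :: r) (m :: q)) : ContainsPat (b :: r) (m :: q) := by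
  obtain ⟨t, ht, hlen, hord⟩ := h
  rcases List.sublist_cons_iff.mp ht with ht | ⟨s, rfl, hs⟩
  · exact ⟨t, ht, hlen, hord⟩
  have hlen' : s.length = q.length := by simpa using hlen
  have above : ∀ x ∈ s, a < x := by
    intro x hx
    obtain ⟨k, hk, rfl⟩ := List.mem_iff_getElem.mp hx
    have := hord 0 (k + 1) (by simp) (by simp; omega)
    simp only [List.getElem!_cons_zero, List.getElem!_cons_succ, getElem!_pos s k hk,
      getElem!_pos q k (hlen' ▸ hk)] at this
    exact this.mpr (hq _ (q.getElem_mem _))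
  rcases List.sublist_cons_iff.mp hs with hs | ⟨s, rfl, -⟩
  · refine ⟨b :: s, hs.cons_cons b, by simpa using hlen, fun x y hx hy => ?_⟩
    rw [← hord x y hx hy]
    have hmem : ∀ k, k < s.length → s[k]! ∈ s := fun k hk => by
      rw [getElem!_pos s k hk]; exact s.getElem_mem hk
    rcases x with _ | x <;> rcases y with _ | y <;>
      simp only [List.getElem!_cons_zero, List.getElem!_cons_succ, lt_irrefl]
    · have := above _ (hmem y (by simp at hy; omega)); omega
    · have := above _ (hmem x (by simp at hx; omega)); omega
  · exact absurd (above b List.mem_cons_self) (by omega)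

theorem AvoidsPat.map_predAbove_of_cons {i : ℕ} {τ p : List ℕ} (h : AvoidsPat (i :: τ) p)
    (hi : i ∉ τ) : AvoidsPat (τ.map (predAbove i)) p := by
  rw [AvoidsPat, containsPat_map_iff (predAbove_lt_predAbove_iff_of_notMem hi)]
  exact fun hc => h (hc.mono (List.sublist_cons_self i τ))

theorem AvoidsPat.cons_map_succAbove {m i j : ℕ} {q s : List ℕ} (hq : ∀ x ∈ q, m < x)
    (hji : j < i) (h : AvoidsPat (j :: s) (m :: q)) :
    AvoidsPat (i :: (j :: s).map (succAbove i)) (m :: q) := by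
  rw [List.map_cons, succAbove_of_lt hji]
  refine fun hc => h ?_
  have hc' := hc.of_cons_cons hq hji
  rwa [← succAbove_of_lt hji, ← List.map_cons,
    containsPat_map_iff fun x _ y _ => (succAbove_strictMono i).lt_iff_lt] at hc'

theorem descList_map {f : ℕ → ℕ} {w : List ℕ} (hf : ∀ x ∈ w, ∀ y ∈ w, f x < f y ↔ x < y) :
    descList (w.map f) = descList w := by
  unfold descList
  rw [List.length_map]
  congr 1
  refine List.filter_congr fun t ht => ?_
  rw [List.mem_range] at ht
  rw [decide_eq_decide, map_getElem!_lt_map_getElem!_iff hf (by omega) (by omega)]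

theorem descList_cons_cons (a b : ℕ) (r : List ℕ) :
    descList (a :: b :: r) = descList (b :: r) + if b < a then 1 else 0 := by
  unfold descList
  simp only [List.length_cons, Nat.add_sub_cancel, List.range_succ_eq_map, List.filter_cons,
    List.filter_map, List.getElem!_cons_zero, List.getElem!_cons_succ]
  have htail : (fun t => decide ((b :: r)[t]! < (a :: b :: r)[t]!)) ∘ succ =
      fun t => decide (r[t]! < (b :: r)[t]!) := by
    funext t; simp only [Function.comp, List.getElem!_cons_succ]
  rw [htail]
  by_cases hba : b < a <;> simp [hba]

theorem List.exists_eq_cons_of_getElem!_zero {α : Type*} [Inhabited α] {l : List α} {a : α}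
    (ha : a ≠ default) (h : l[0]! = a) : ∃ s, l = a :: s := by
  rcases l with _ | ⟨a, s⟩ <;> simp_all

theorem List.exists_eq_cons_cons_of_getElem! {α : Type*} [Inhabited α] {l : List α} {a b : α}
    (hb : b ≠ default) (h₀ : l[0]! = a) (h₁ : l[1]! = b) : ∃ r, l = a :: b :: r := by
  rcases l with _ | ⟨a, _ | ⟨b, r⟩⟩ <;> simp_all

theorem stmt8_general (n i j : ℕ) (hj : 1 ≤ j) (hji : j < i) (hi : i ≤ n) :
    Set.BijOn (fun π : List ℕ => reduceGt i π.tail)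
      {π : List ℕ | IsPermList n π ∧ AvoidsPat π [1,2,4,3] ∧ AvoidsPat π [1,3,2,4] ∧
        π[0]! = i ∧ π[1]! = j}
      {σ : List ℕ | IsPermList (n - 1) σ ∧ AvoidsPat σ [1,2,4,3] ∧
        AvoidsPat σ [1,3,2,4] ∧ σ[0]! = j} ∧
    ∀ π ∈ {π : List ℕ | IsPermList n π ∧ AvoidsPat π [1,2,4,3] ∧ AvoidsPat π [1,3,2,4] ∧
        π[0]! = i ∧ π[1]! = j},
      descList π = descList (reduceGt i π.tail) + 1 := by
  have shape : ∀ π : List ℕ, IsPermList n π → π[0]! = i → π[1]! = j →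
      ∃ r, π = i :: j :: r ∧ i ∉ j :: r := by
    intro π hπ h₀ h₁
    obtain ⟨r, rfl⟩ := List.exists_eq_cons_cons_of_getElem! (by simp; omega) h₀ h₁
    exact ⟨r, rfl, (List.nodup_cons.mp (isPermList_iff.mp hπ).1).1⟩
  refine ⟨Set.InvOn.bijOn (f' := fun σ => i :: σ.map (succAbove i)) ⟨?_, ?_⟩ ?_ ?_, ?_⟩
  · rintro π ⟨hπ, -, -, h₀, h₁⟩
    obtain ⟨r, rfl, hir⟩ := shape π hπ h₀ h₁
    exact congrArg (i :: ·) (map_succAbove_map_predAbove hir)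
  · rintro σ -
    simp [reduceGt_eq_map, Function.comp_def, predAbove_succAbove]
  · rintro π ⟨hπ, h1243, h1324, h₀, h₁⟩
    obtain ⟨r, rfl, hir⟩ := shape π hπ h₀ h₁
    exact ⟨hπ.map_predAbove, h1243.map_predAbove_of_cons hir, h1324.map_predAbove_of_cons hir,
      predAbove_of_lt hji⟩
  · rintro σ ⟨hσ, h1243, h1324, h₀⟩
    obtain ⟨s, rfl⟩ := List.exists_eq_cons_of_getElem!_zero (by simp; omega) h₀
    exact ⟨hσ.cons_map_succAbove (by omega) hi, h1243.cons_map_succAbove (by decide) hji,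
      h1324.cons_map_succAbove (by decide) hji, rfl, succAbove_of_lt hji⟩
  · rintro π ⟨hπ, -, -, h₀, h₁⟩
    obtain ⟨r, rfl, hir⟩ := shape π hπ h₀ h₁
    rw [descList_cons_cons, if_pos hji, List.tail_cons, reduceGt_eq_map,
      descList_map (predAbove_lt_predAbove_iff_of_notMem hir)]

/-- For `1 ≤ j < i ≤ n`, deleting the first letter and reducing letters above `i`
is a bijection from `{1243,1324}`-avoiders of `[n]` starting `i, j` onto
`{1243,1324}`-avoiders of `[n-1]` starting with `j`, decreasing `desc` by one. -/
theorem stmt8 (n i j : ℕ) (hn : 3 ≤ n) (hj : 1 ≤ j) (hji : j < i) (hi : i ≤ n) :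
    Set.BijOn (fun π : List ℕ => reduceGt i π.tail)
      {π : List ℕ | IsPermList n π ∧ AvoidsPat π [1,2,4,3] ∧ AvoidsPat π [1,3,2,4] ∧
        π[0]! = i ∧ π[1]! = j}
      {σ : List ℕ | IsPermList (n - 1) σ ∧ AvoidsPat σ [1,2,4,3] ∧
        AvoidsPat σ [1,3,2,4] ∧ σ[0]! = j} ∧
    ∀ π ∈ {π : List ℕ | IsPermList n π ∧ AvoidsPat π [1,2,4,3] ∧ AvoidsPat π [1,3,2,4] ∧
        π[0]! = i ∧ π[1]! = j},
      descList π = descList (reduceGt i π.tail) + 1 :=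
  stmt8_general n i j hj hji hi
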